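/- arXiv:2010.12112 — 8 statements merged into one kernel-verified Lean document; each statement's English description precedes it below -/
import Mathlib

section
/- Let ε ≥ 0 and 0 ≤ δ ≤ 1, and let TPR, FPR ∈ [0,1] be real numbers satisfying FPR + e^ε·(1 − TPR) ≥ 1 − δ and (1 − TPR) + e^ε·FPR ≥ 1 − δ. Then TPR − FPR ≤ (e^ε − 1 + 2δ)/(e^ε + 1). -/
theorem advantage_bound_from_kairouz_general
    (ε δ TPR FPR : ℝ)
    (h1 : FPR + Real.exp ε * (1 - TPR) ≥ 1 - δ)
    (h2 : (1 - TPR) + Real.exp ε * FPR ≥ 1 - δ) :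
    TPR - FPR ≤ (Real.exp ε - 1 + 2 * δ) / (Real.exp ε + 1) := by
  have hsum : (Real.exp ε + 1) * (1 - (TPR - FPR)) ≥ 2 * (1 - δ) := by
    linear_combination h1 + h2
  rw [le_div_iff₀ (by positivity)]
  linarith

theorem advantage_bound_from_kairouz
    (ε δ TPR FPR : ℝ)
    (hε : 0 ≤ ε) (hδ0 : 0 ≤ δ) (hδ1 : δ ≤ 1)
    (hT0 : 0 ≤ TPR) (hT1 : TPR ≤ 1) (hF0 : 0 ≤ FPR) (hF1 : FPR ≤ 1)
    (h1 : FPR + Real.exp ε * (1 - TPR) ≥ 1 - δ)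
    (h2 : (1 - TPR) + Real.exp ε * FPR ≥ 1 - δ) :
    TPR - FPR ≤ (Real.exp ε - 1 + 2 * δ) / (Real.exp ε + 1) :=
  advantage_bound_from_kairouz_general ε δ TPR FPR h1 h2
end

section
/- For all ε ≥ 0 and all δ with 0 ≤ δ ≤ 1, (e^ε − 1 + 2δ)/(e^ε + 1) ≤ 1 − e^{−ε}·(1 − δ). -/
/-! With `a = e^ε ≥ 1`, the gap between the two bounds is `(1 - δ)(a - 1) / (a (a + 1))`,
a product of nonnegative factors. -/

theorem one_sub_div_sub_div_add_one {a δ : ℝ} (ha : 0 < a) :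
    1 - (1 - δ) / a - (a - 1 + 2 * δ) / (a + 1) = (1 - δ) * (a - 1) / (a * (a + 1)) := by
  field_simp
  ring

theorem div_add_one_le_one_sub_div {a δ : ℝ} (ha : 1 ≤ a) (hδ : δ ≤ 1) :
    (a - 1 + 2 * δ) / (a + 1) ≤ 1 - (1 - δ) / a := by
  have hgap : 0 ≤ 1 - (1 - δ) / a - (a - 1 + 2 * δ) / (a + 1) := by
    rw [one_sub_div_sub_div_add_one (by linarith)]
    have : 0 ≤ (1 - δ) * (a - 1) := mul_nonneg (by linarith) (by linarith)
    positivity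
  linarith

theorem new_bound_tighter_than_erlingsson_general
    (ε δ : ℝ) (hε : 0 ≤ ε) (hδ1 : δ ≤ 1) :
    (Real.exp ε - 1 + 2 * δ) / (Real.exp ε + 1) ≤ 1 - Real.exp (-ε) * (1 - δ) := by
  rw [Real.exp_neg, inv_mul_eq_div]
  exact div_add_one_le_one_sub_div (Real.one_le_exp hε) hδ1

theorem new_bound_tighter_than_erlingsson
    (ε δ : ℝ) (hε : 0 ≤ ε) (hδ0 : 0 ≤ δ) (hδ1 : δ ≤ 1) :
    (Real.exp ε - 1 + 2 * δ) / (Real.exp ε + 1) ≤ 1 - Real.exp (-ε) * (1 - δ) :=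
  new_bound_tighter_than_erlingsson_general ε δ hε hδ1
end

section
/- Let P₀ and P₁ be probability measures satisfying (ε,δ)-indistinguishability in both directions (P_i(E) ≤ e^ε · P_{1-i}(E) + δ for all measurable E and i ∈ {0,1}). Then for every measurable decision function f into {0,1}, P₀(f = 0) − P₁(f = 0) ≤ (e^ε − 1 + 2δ)/(e^ε + 1). -/
/-!
Fix a rejection region `E` and write `p = P₀(E)`, `q = P₁(E)`. Indistinguishability applied to `E`
gives `p ≤ e^ε q + δ`, and applied in the other direction to `Eᶜ` gives
`1 - q ≤ e^ε (1 - p) + δ`. Adding the two inequalities yields `(e^ε + 1)(p - q) ≤ e^ε - 1 + 2δ`.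
-/

open MeasureTheory

lemma sub_le_div_of_le_mul_add_of_one_sub_le {a p q δ₀ δ₁ : ℝ} (ha : 0 < a + 1)
    (h₀ : p ≤ a * q + δ₀) (h₁ : 1 - q ≤ a * (1 - p) + δ₁) :
    p - q ≤ (a - 1 + δ₀ + δ₁) / (a + 1) := by
  rw [le_div_iff₀ ha]
  linear_combination h₀ + h₁

lemma toReal_sub_toReal_le_of_indistinguishable {Ω : Type*} [MeasurableSpace Ω]
    {P₀ P₁ : Measure Ω} [IsProbabilityMeasure P₀] [IsProbabilityMeasure P₁]
    {a δ₀ δ₁ : ℝ} (ha : 0 < a + 1) {E : Set Ω} (hE : MeasurableSet E)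
    (h₀ : (P₀ E).toReal ≤ a * (P₁ E).toReal + δ₀)
    (h₁ : (P₁ Eᶜ).toReal ≤ a * (P₀ Eᶜ).toReal + δ₁) :
    (P₀ E).toReal - (P₁ E).toReal ≤ (a - 1 + δ₀ + δ₁) / (a + 1) := by
  have hc₀ : (P₀ Eᶜ).toReal = 1 - (P₀ E).toReal := probReal_compl_eq_one_sub hE
  have hc₁ : (P₁ Eᶜ).toReal = 1 - (P₁ E).toReal := probReal_compl_eq_one_sub hE
  rw [hc₀, hc₁] at h₁
  exact sub_le_div_of_le_mul_add_of_one_sub_le ha h₀ h₁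

theorem advantage_bound_indistinguishable_general
    {Ω : Type*} [MeasurableSpace Ω]
    (P₀ P₁ : MeasureTheory.Measure Ω)
    [MeasureTheory.IsProbabilityMeasure P₀] [MeasureTheory.IsProbabilityMeasure P₁]
    (ε δ : ℝ)
    (h01 : ∀ E : Set Ω, MeasurableSet E →
      (P₀ E).toReal ≤ Real.exp ε * (P₁ E).toReal + δ)
    (h10 : ∀ E : Set Ω, MeasurableSet E →
      (P₁ E).toReal ≤ Real.exp ε * (P₀ E).toReal + δ)
    (f : Ω → Bool) (hf : Measurable f) :
    (P₀ {x | f x = false}).toReal - (P₁ {x | f x = false}).toReal ≤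
      (Real.exp ε - 1 + 2 * δ) / (Real.exp ε + 1) := by
  have hE : MeasurableSet {x | f x = false} := hf (measurableSet_singleton false)
  rw [two_mul, ← add_assoc]
  exact toReal_sub_toReal_le_of_indistinguishable (by positivity) hE
    (h01 _ hE) (h10 _ hE.compl)

theorem advantage_bound_indistinguishable
    {Ω : Type*} [MeasurableSpace Ω]
    (P₀ P₁ : MeasureTheory.Measure Ω)
    [MeasureTheory.IsProbabilityMeasure P₀] [MeasureTheory.IsProbabilityMeasure P₁]
    (ε δ : ℝ) (hε : 0 ≤ ε) (hδ0 : 0 ≤ δ) (hδ1 : δ ≤ 1)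
    (h01 : ∀ E : Set Ω, MeasurableSet E →
      (P₀ E).toReal ≤ Real.exp ε * (P₁ E).toReal + δ)
    (h10 : ∀ E : Set Ω, MeasurableSet E →
      (P₁ E).toReal ≤ Real.exp ε * (P₀ E).toReal + δ)
    (f : Ω → Bool) (hf : Measurable f) :
    (P₀ {x | f x = false}).toReal - (P₁ {x | f x = false}).toReal ≤
      (Real.exp ε - 1 + 2 * δ) / (Real.exp ε + 1) :=
  advantage_bound_indistinguishable_general P₀ P₁ ε δ h01 h10 f hf
end

section
/- Consider the following abstract pathological mixture experiment: Z is a finite type with at least two elements, p is the uniform distribution on Z, and the data dependence is total, i.e., conditioned on z being a member the whole training multiset is {z}^n. Let M : multiset Z → PMF α be a mechanism such that for some z₀ ≠ z₁ and some event R, M({z₀}^n)(R) = 1 and M({z₁}^n)(R) = 0. Then there is a test (output the bit 'member' iff the observation (a, z) satisfies a ∈ R and z = z₀, and 'non-member' iff a ∈ R and z = z₁, arbitrary otherwise) whose advantage, conditioned on the challenge point being in {z₀, z₁}, equals 1. -/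
namespace PMF

variable {α : Type*} (q : PMF α) (s : Set α)

theorem toOuterMeasure_compl_eq_zero_iff :
    q.toOuterMeasure sᶜ = 0 ↔ q.toOuterMeasure s = 1 := by
  rw [toOuterMeasure_apply_eq_zero_iff, toOuterMeasure_apply_eq_one_iff,
    Set.disjoint_compl_right_iff_subset]

theorem toOuterMeasure_compl_eq_one_iff :
    q.toOuterMeasure sᶜ = 1 ↔ q.toOuterMeasure s = 0 := by
  rw [← toOuterMeasure_compl_eq_zero_iff, compl_compl]

end PMF

section SeparatingTest

variable {Z α : Type*} [DecidableEq Z] (R : Set α) [DecidablePred (· ∈ R)] (z₀ : Z)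

/-- `false` encodes the guess "member". -/
def separatingTest (a : α) (z : Z) : Bool :=
  !decide (a ∈ R ↔ z = z₀)

theorem separatingTest_eq_false_self : {a | separatingTest R z₀ a z₀ = false} = R := by
  ext a
  simp [separatingTest]

theorem separatingTest_eq_false_of_ne {z₁ : Z} (hz : z₀ ≠ z₁) :
    {a | separatingTest R z₀ a z₁ = false} = Rᶜ := by
  ext a
  simp [separatingTest, hz.symm]

end SeparatingTest

open Classical in
theorem pathological_mixture_perfect_advantage_general
    {Z α : Type*}
    (M : Multiset Z → PMF α) (n : ℕ)
    (z₀ z₁ : Z) (hz : z₀ ≠ z₁) (R : Set α)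
    (h0 : (M (Multiset.replicate n z₀)).toOuterMeasure R = 1)
    (h1 : (M (Multiset.replicate n z₁)).toOuterMeasure R = 0) :
    ∃ Att : α → Z → Bool,
      ((1 / 2) * ((M (Multiset.replicate n z₀)).toOuterMeasure
            {a | Att a z₀ = false}).toReal +
        (1 / 2) * ((M (Multiset.replicate n z₁)).toOuterMeasure
            {a | Att a z₁ = false}).toReal) -
      ((1 / 2) * ((M (Multiset.replicate n z₀)).toOuterMeasure
            {a | Att a z₁ = false}).toReal +
        (1 / 2) * ((M (Multiset.replicate n z₁)).toOuterMeasure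
            {a | Att a z₀ = false}).toReal) = 1 := by
  refine ⟨separatingTest R z₀, ?_⟩
  have hc0 := (PMF.toOuterMeasure_compl_eq_zero_iff _ R).2 h0
  have hc1 := (PMF.toOuterMeasure_compl_eq_one_iff _ R).2 h1
  rw [separatingTest_eq_false_self, separatingTest_eq_false_of_ne R z₀ hz, h0, h1, hc0, hc1]
  norm_num

theorem pathological_mixture_perfect_advantage
    {Z α : Type*} [Fintype Z] [Nontrivial Z] [MeasurableSpace α]
    (p : PMF Z) (hp : ∀ z : Z, p z = (Fintype.card Z : ENNReal)⁻¹)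
    (M : Multiset Z → PMF α) (n : ℕ)
    (z₀ z₁ : Z) (hz : z₀ ≠ z₁) (R : Set α)
    (h0 : (M (Multiset.replicate n z₀)).toOuterMeasure R = 1)
    (h1 : (M (Multiset.replicate n z₁)).toOuterMeasure R = 0) :
    ∃ Att : α → Z → Bool,
      ((1 / 2) * ((M (Multiset.replicate n z₀)).toOuterMeasure
            {a | Att a z₀ = false}).toReal +
        (1 / 2) * ((M (Multiset.replicate n z₁)).toOuterMeasure
            {a | Att a z₁ = false}).toReal) -
      ((1 / 2) * ((M (Multiset.replicate n z₀)).toOuterMeasure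
            {a | Att a z₁ = false}).toReal +
        (1 / 2) * ((M (Multiset.replicate n z₁)).toOuterMeasure
            {a | Att a z₀ = false}).toReal) = 1 :=
  pathological_mixture_perfect_advantage_general M n z₀ z₁ hz R h0 h1
end

section
/- Let P₀, P₁ satisfy the two-sided (ε,δ)-closeness P_i(E) ≤ e^ε P_{1-i}(E) + δ for all events E. Then the total variation distance between P₀ and P₁ is at most (e^ε − 1 + 2δ)/(e^ε + 1). -/
/-! Apply the closeness bound to `E` in one direction and to `Eᶜ` in the other: since
`Pᵢ Eᶜ = 1 - Pᵢ E`, adding the two inequalities gives `(c + 1) (P₀ E - P₁ E) ≤ c - 1 + 2δ`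
with `c = e^ε`, and exchanging the roles of `P₀` and `P₁` bounds the other sign. -/

open MeasureTheory

theorem measureReal_sub_le_of_le_mul_add {Ω : Type*} [MeasurableSpace Ω] {μ ν : Measure Ω}
    [IsProbabilityMeasure μ] [IsProbabilityMeasure ν] {c δ : ℝ} (hc : 0 < c + 1)
    {E : Set Ω} (hE : MeasurableSet E) (hμν : μ.real E ≤ c * ν.real E + δ)
    (hνμ : ν.real Eᶜ ≤ c * μ.real Eᶜ + δ) :
    μ.real E - ν.real E ≤ (c - 1 + 2 * δ) / (c + 1) := by
  rw [probReal_compl_eq_one_sub hE, probReal_compl_eq_one_sub hE] at hνμ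
  rw [le_div_iff₀ hc]
  linarith

theorem tv_bound_indistinguishable_general
    {Ω : Type*} [MeasurableSpace Ω]
    (P₀ P₁ : MeasureTheory.Measure Ω)
    [MeasureTheory.IsProbabilityMeasure P₀] [MeasureTheory.IsProbabilityMeasure P₁]
    (ε δ : ℝ)
    (h01 : ∀ E : Set Ω, MeasurableSet E →
      (P₀ E).toReal ≤ Real.exp ε * (P₁ E).toReal + δ)
    (h10 : ∀ E : Set Ω, MeasurableSet E →
      (P₁ E).toReal ≤ Real.exp ε * (P₀ E).toReal + δ) :
    ∀ E : Set Ω, MeasurableSet E →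
      |(P₀ E).toReal - (P₁ E).toReal| ≤
        (Real.exp ε - 1 + 2 * δ) / (Real.exp ε + 1) := by
  intro E hE
  have hc : 0 < Real.exp ε + 1 := by positivity
  rw [abs_sub_le_iff]
  exact ⟨measureReal_sub_le_of_le_mul_add hc hE (h01 E hE) (h10 Eᶜ hE.compl),
    measureReal_sub_le_of_le_mul_add hc hE (h10 E hE) (h01 Eᶜ hE.compl)⟩

theorem tv_bound_indistinguishable
    {Ω : Type*} [MeasurableSpace Ω]
    (P₀ P₁ : MeasureTheory.Measure Ω)
    [MeasureTheory.IsProbabilityMeasure P₀] [MeasureTheory.IsProbabilityMeasure P₁]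
    (ε δ : ℝ) (hε : 0 ≤ ε) (hδ0 : 0 ≤ δ) (hδ1 : δ ≤ 1)
    (h01 : ∀ E : Set Ω, MeasurableSet E →
      (P₀ E).toReal ≤ Real.exp ε * (P₁ E).toReal + δ)
    (h10 : ∀ E : Set Ω, MeasurableSet E →
      (P₁ E).toReal ≤ Real.exp ε * (P₀ E).toReal + δ) :
    ∀ E : Set Ω, MeasurableSet E →
      |(P₀ E).toReal - (P₁ E).toReal| ≤
        (Real.exp ε - 1 + 2 * δ) / (Real.exp ε + 1) :=
  tv_bound_indistinguishable_general P₀ P₁ ε δ h01 h10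
end

section
/- Let P₀, P₁ satisfy the two-sided pure ε-closeness P_i(E) ≤ e^ε P_{1-i}(E) for all events E (δ = 0). Then for any test f, both P₀(f=0) − P₁(f=0) and P₁(f=1) − P₀(f=1) are bounded by (e^ε − 1)/(e^ε + 1), and the bound is achieved by the pair of Bernoulli distributions P₀ = Bernoulli(e^ε/(e^ε+1)), P₁ = Bernoulli(1/(e^ε+1)) with the identity test. -/
/-!
With `c = exp ε`, a test's rejection region `E` has `P₀ E ≤ c P₁ E` and `1 - P₁ E ≤ c (1 - P₀ E)`;
adding the two gives `(c + 1) (P₀ E - P₁ E) ≤ c - 1`. Randomized response, which reports a bit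
truthfully with probability `c / (c + 1)`, turns both inequalities into equalities on `{false}`.
-/

open MeasureTheory Real

theorem measureReal_sub_le_of_le_mul {Ω : Type*} [MeasurableSpace Ω] {P Q : Measure Ω}
    [IsProbabilityMeasure P] [IsProbabilityMeasure Q] {c : ℝ} (hc : -1 < c) {E : Set Ω}
    (hE : MeasurableSet E) (hPQ : P.real E ≤ c * Q.real E) (hQP : Q.real Eᶜ ≤ c * P.real Eᶜ) :
    P.real E - Q.real E ≤ (c - 1) / (c + 1) := by
  rw [probReal_compl_eq_one_sub hE, probReal_compl_eq_one_sub hE] at hQP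
  rw [le_div_iff₀ (by linarith)]
  linarith

theorem PMF.toMeasure_le_mul_of_le_mul {α : Type*} [MeasurableSpace α]
    [MeasurableSingletonClass α] {p q : PMF α} {c : ENNReal} (h : ∀ x, p x ≤ c * q x)
    (s : Set α) : p.toMeasure s ≤ c * q.toMeasure s := by
  rw [toMeasure_apply_eq_tsum, toMeasure_apply_eq_tsum, ← ENNReal.tsum_mul_left]
  refine ENNReal.tsum_le_tsum fun x => ?_
  by_cases hx : x ∈ s <;> simp [hx, h x]

theorem exp_div_exp_add_one_add_one_div (ε : ℝ) :
    exp ε / (exp ε + 1) + 1 / (exp ε + 1) = 1 := by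
  field_simp

noncomputable def randomizedResponse (ε : ℝ) (b : Bool) : PMF Bool :=
  PMF.ofFintype
    (fun x => ENNReal.ofReal (if x = b then exp ε / (exp ε + 1) else 1 / (exp ε + 1))) <| by
    have hq : 0 ≤ 1 / (exp ε + 1) := by positivity
    have hp : 0 ≤ exp ε / (exp ε + 1) := by positivity
    rw [Fintype.sum_bool]
    cases b <;>
      simp only [Bool.true_eq_false, Bool.false_eq_true, if_true, if_false] <;>
      rw [← ENNReal.ofReal_add (by assumption) (by assumption), ← ENNReal.ofReal_one] <;>
      congr 1 <;> linarith [exp_div_exp_add_one_add_one_div ε]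

namespace randomizedResponse

variable {ε : ℝ}

theorem apply_self (b : Bool) :
    randomizedResponse ε b b = ENNReal.ofReal (exp ε / (exp ε + 1)) := by
  simp [randomizedResponse, PMF.ofFintype_apply]

theorem apply_of_ne {b x : Bool} (h : x ≠ b) :
    randomizedResponse ε b x = ENNReal.ofReal (1 / (exp ε + 1)) := by
  simp [randomizedResponse, PMF.ofFintype_apply, h]

theorem le_mul (hε : 0 ≤ ε) (b b' x : Bool) :
    randomizedResponse ε b x ≤ ENNReal.ofReal (exp ε) * randomizedResponse ε b' x := by
  have hpos : 0 < exp ε + 1 := by positivity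
  have hq_le_p : 1 / (exp ε + 1) ≤ exp ε / (exp ε + 1) :=
    div_le_div_of_nonneg_right (one_le_exp hε) hpos.le
  simp only [randomizedResponse, PMF.ofFintype_apply]
  rw [← ENNReal.ofReal_mul (exp_pos ε).le]
  refine ENNReal.ofReal_le_ofReal ?_
  -- every mass lies between `q = 1 / (e + 1)` and `p = e q`
  calc (if x = b then exp ε / (exp ε + 1) else 1 / (exp ε + 1))
      ≤ exp ε / (exp ε + 1) := by split_ifs <;> linarith
    _ = exp ε * (1 / (exp ε + 1)) := (mul_one_div _ _).symm
    _ ≤ exp ε * (if x = b' then exp ε / (exp ε + 1) else 1 / (exp ε + 1)) := by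
        gcongr; split_ifs <;> linarith

theorem toReal_toMeasure_le_mul (hε : 0 ≤ ε) (b b' : Bool) (E : Set Bool) :
    ((randomizedResponse ε b).toMeasure E).toReal ≤
      exp ε * ((randomizedResponse ε b').toMeasure E).toReal := by
  rw [← ENNReal.toReal_ofReal (exp_pos ε).le, ← ENNReal.toReal_mul]
  exact ENNReal.toReal_mono (by finiteness)
    (PMF.toMeasure_le_mul_of_le_mul (le_mul hε b b') E)

end randomizedResponse

theorem pure_dp_advantage_bound_tight
    {Ω : Type*} [MeasurableSpace Ω]
    (P₀ P₁ : MeasureTheory.Measure Ω)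
    [MeasureTheory.IsProbabilityMeasure P₀] [MeasureTheory.IsProbabilityMeasure P₁]
    (ε : ℝ) (hε : 0 ≤ ε)
    (h01 : ∀ E : Set Ω, MeasurableSet E →
      (P₀ E).toReal ≤ Real.exp ε * (P₁ E).toReal)
    (h10 : ∀ E : Set Ω, MeasurableSet E →
      (P₁ E).toReal ≤ Real.exp ε * (P₀ E).toReal) :
    (∀ f : Ω → Bool, Measurable f →
      (P₀ {x | f x = false}).toReal - (P₁ {x | f x = false}).toReal ≤
          (Real.exp ε - 1) / (Real.exp ε + 1) ∧
        (P₁ {x | f x = true}).toReal - (P₀ {x | f x = true}).toReal ≤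
          (Real.exp ε - 1) / (Real.exp ε + 1)) ∧
    (∃ Q₀ Q₁ : MeasureTheory.Measure Bool,
      MeasureTheory.IsProbabilityMeasure Q₀ ∧ MeasureTheory.IsProbabilityMeasure Q₁ ∧
      Q₀ {false} = ENNReal.ofReal (Real.exp ε / (Real.exp ε + 1)) ∧
      Q₁ {false} = ENNReal.ofReal (1 / (Real.exp ε + 1)) ∧
      (∀ E : Set Bool, (Q₀ E).toReal ≤ Real.exp ε * (Q₁ E).toReal) ∧
      (∀ E : Set Bool, (Q₁ E).toReal ≤ Real.exp ε * (Q₀ E).toReal) ∧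
      (Q₀ {x : Bool | id x = false}).toReal - (Q₁ {x : Bool | id x = false}).toReal =
        (Real.exp ε - 1) / (Real.exp ε + 1)) := by
  have hc : -1 < exp ε := by linarith [exp_pos ε]
  refine ⟨fun f hf => ⟨?_, ?_⟩, (randomizedResponse ε false).toMeasure,
    (randomizedResponse ε true).toMeasure, inferInstance, inferInstance, ?_, ?_,
    randomizedResponse.toReal_toMeasure_le_mul hε _ _,
    randomizedResponse.toReal_toMeasure_le_mul hε _ _, ?_⟩
  · have hE : MeasurableSet {x | f x = false} := hf (measurableSet_singleton false)
    exact measureReal_sub_le_of_le_mul hc hE (h01 _ hE) (h10 _ hE.compl)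
  · have hE : MeasurableSet {x | f x = true} := hf (measurableSet_singleton true)
    exact measureReal_sub_le_of_le_mul hc hE (h10 _ hE) (h01 _ hE.compl)
  · simp [randomizedResponse.apply_self]
  · simp [randomizedResponse.apply_of_ne]
  · have hpos : 0 < exp ε + 1 := by positivity
    simp only [id, Set.ofPred_eq_eq_singleton,
      PMF.toMeasure_apply_singleton _ _ (measurableSet_singleton _),
      randomizedResponse.apply_self, randomizedResponse.apply_of_ne Bool.false_ne_true]
    rw [ENNReal.toReal_ofReal (by positivity), ENNReal.toReal_ofReal (by positivity),
      div_sub_div_same]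
end

section
/- Suppose a mechanism M : multiset Z → PMF α is ε-DP in the bounded sense. Fix a distribution q on multisets of size n−1 and a distribution p on Z, with the multiset independent of the challenge element. Define the member observation distribution P₀ on α × Z by sampling z ~ p, S̃ ~ q, a ~ M(S̃ + {z}) and outputting (a, z); and the non-member distribution P₁ by sampling z ~ p, z' ~ p, S̃ ~ q, a ~ M(S̃ + {z'}) and outputting (a, z). Then for all events E ⊆ α × Z, P₀(E) ≤ e^ε P₁(E) and P₁(E) ≤ e^ε P₀(E), and consequently any test distinguishing P₀ from P₁ has advantage at most (e^ε − 1)/(e^ε + 1). -/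
/-!
Mixing preserves multiplicative closeness: since `M (z ::ₘ T)` is within a factor `e^ε` of
`M (z' ::ₘ T)`, so are their mixtures over `T ~ q`, and hence the mixture with a fixed challenge `z`
is within `e^ε` of the mixture over a fresh `z' ~ p`. Pairing the output with `z` and averaging
over `z ~ p` once more gives `P₀(E) ≤ e^ε P₁(E)` and `P₁(E) ≤ e^ε P₀(E)`. Writing `A = P₀(E)`, `B = P₁(E)`, the two bounds applied to `E` and `Eᶜ` read
`A ≤ e^ε B` and `1 - B ≤ e^ε (1 - A)`, whose sum gives `(e^ε + 1)(A - B) ≤ e^ε - 1`.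
-/

open ENNReal

namespace PMF

variable {α β : Type*}

theorem toOuterMeasure_bind_le_mul_bind (p : PMF α) {f g : α → PMF β} {c : ℝ≥0∞} {s : Set β}
    (h : ∀ a, (f a).toOuterMeasure s ≤ c * (g a).toOuterMeasure s) :
    (p.bind f).toOuterMeasure s ≤ c * (p.bind g).toOuterMeasure s := by
  rw [toOuterMeasure_bind_apply, toOuterMeasure_bind_apply, ← ENNReal.tsum_mul_left]
  exact ENNReal.tsum_le_tsum fun a => (mul_le_mul_right (h a) (p a)).trans_eq (mul_left_comm ..)

theorem toReal_toOuterMeasure_compl (P : PMF β) (s : Set β) :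
    (P.toOuterMeasure sᶜ).toReal = 1 - (P.toOuterMeasure s).toReal := by
  let _ : MeasurableSpace β := ⊤
  simpa only [MeasureTheory.measureReal_def, toMeasure_apply_eq_toOuterMeasure] using
    MeasureTheory.probReal_compl_eq_one_sub (μ := P.toMeasure) (s := s) trivial

theorem toReal_toOuterMeasure_le_mul (P Q : PMF β) {s : Set β} {e : ℝ} (he : 0 ≤ e)
    (h : P.toOuterMeasure s ≤ ENNReal.ofReal e * Q.toOuterMeasure s) :
    (P.toOuterMeasure s).toReal ≤ e * (Q.toOuterMeasure s).toReal := by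
  have hQ : Q.toOuterMeasure s ≠ ∞ := by
    let _ : MeasurableSpace β := ⊤
    simpa only [toMeasure_apply_eq_toOuterMeasure] using MeasureTheory.measure_ne_top Q.toMeasure s
  simpa only [toReal_mul, toReal_ofReal he] using toReal_mono (mul_ne_top ofReal_ne_top hQ) h

theorem toReal_toOuterMeasure_sub_le (P Q : PMF β) {s : Set β} {e : ℝ} (he : 0 ≤ e)
    (h : P.toOuterMeasure s ≤ ENNReal.ofReal e * Q.toOuterMeasure s)
    (hc : Q.toOuterMeasure sᶜ ≤ ENNReal.ofReal e * P.toOuterMeasure sᶜ) :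
    (P.toOuterMeasure s).toReal - (Q.toOuterMeasure s).toReal ≤ (e - 1) / (e + 1) := by
  have hA := P.toReal_toOuterMeasure_le_mul Q he h
  have hB := Q.toReal_toOuterMeasure_le_mul P he hc
  rw [toReal_toOuterMeasure_compl, toReal_toOuterMeasure_compl] at hB
  rw [le_div_iff₀ (by linarith)]
  linarith

end PMF

theorem iid_membership_advantage_bound_general
    {Z α : Type*}
    (M : Multiset Z → PMF α) (ε : ℝ)
    (hDP : ∀ (T : Multiset Z) (z z' : Z) (R : Set α),
      (M (z ::ₘ T)).toOuterMeasure R ≤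
        ENNReal.ofReal (Real.exp ε) * (M (z' ::ₘ T)).toOuterMeasure R)
    (p : PMF Z) (q : PMF (Multiset Z))
    (P₀ P₁ : PMF (α × Z))
    (hP₀ : P₀ = p.bind (fun z => q.bind (fun T =>
      (M (z ::ₘ T)).map (fun a => (a, z)))))
    (hP₁ : P₁ = p.bind (fun z => p.bind (fun z' => q.bind (fun T =>
      (M (z' ::ₘ T)).map (fun a => (a, z)))))) :
    (∀ E : Set (α × Z),
      P₀.toOuterMeasure E ≤ ENNReal.ofReal (Real.exp ε) * P₁.toOuterMeasure E ∧
      P₁.toOuterMeasure E ≤ ENNReal.ofReal (Real.exp ε) * P₀.toOuterMeasure E) ∧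
    (∀ f : α × Z → Bool,
      (P₀.toOuterMeasure {x | f x = false}).toReal -
          (P₁.toOuterMeasure {x | f x = false}).toReal ≤
        (Real.exp ε - 1) / (Real.exp ε + 1)) := by
  set K : Z → PMF α := fun z => q.bind fun T => M (z ::ₘ T)
  have hK (z z' : Z) (R : Set α) :
      (K z).toOuterMeasure R ≤ ENNReal.ofReal (Real.exp ε) * (K z').toOuterMeasure R :=
    q.toOuterMeasure_bind_le_mul_bind fun T => hDP T z z' R
  have hmix (z : Z) (R : Set α) :
      (K z).toOuterMeasure R ≤ ENNReal.ofReal (Real.exp ε) * (p.bind K).toOuterMeasure R ∧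
      (p.bind K).toOuterMeasure R ≤ ENNReal.ofReal (Real.exp ε) * (K z).toOuterMeasure R := by
    constructor
    · simpa only [PMF.bind_const] using
        p.toOuterMeasure_bind_le_mul_bind (f := fun _ => K z) fun z' => hK z z' R
    · simpa only [PMF.bind_const] using
        p.toOuterMeasure_bind_le_mul_bind (g := fun _ => K z) fun z' => hK z' z R
  have hP₀' : P₀ = p.bind fun z => (K z).map (·, z) := by
    simp only [hP₀, K, PMF.map_bind]
  have hP₁' : P₁ = p.bind fun z => (p.bind K).map (·, z) := by
    simp only [hP₁, K, PMF.map_bind]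
  have hbound (E : Set (α × Z)) :
      P₀.toOuterMeasure E ≤ ENNReal.ofReal (Real.exp ε) * P₁.toOuterMeasure E ∧
      P₁.toOuterMeasure E ≤ ENNReal.ofReal (Real.exp ε) * P₀.toOuterMeasure E := by
    simp only [hP₀', hP₁']
    exact ⟨p.toOuterMeasure_bind_le_mul_bind fun z => by
        simpa only [PMF.toOuterMeasure_map_apply] using (hmix z _).1,
      p.toOuterMeasure_bind_le_mul_bind fun z => by
        simpa only [PMF.toOuterMeasure_map_apply] using (hmix z _).2⟩
  exact ⟨hbound, fun f =>
    PMF.toReal_toOuterMeasure_sub_le P₀ P₁ (Real.exp_pos ε).le (hbound _).1 (hbound _).2⟩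

theorem iid_membership_advantage_bound
    {Z α : Type*} [Countable Z] [MeasurableSpace α] [MeasurableSpace Z]
    (M : Multiset Z → PMF α) (ε : ℝ) (hε : 0 ≤ ε) (n : ℕ)
    (hDP : ∀ (T : Multiset Z) (z z' : Z) (R : Set α),
      (M (z ::ₘ T)).toOuterMeasure R ≤
        ENNReal.ofReal (Real.exp ε) * (M (z' ::ₘ T)).toOuterMeasure R)
    (p : PMF Z) (q : PMF (Multiset Z))
    (hq : ∀ T ∈ q.support, Multiset.card T = n - 1)
    (P₀ P₁ : PMF (α × Z))
    (hP₀ : P₀ = p.bind (fun z => q.bind (fun T =>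
      (M (z ::ₘ T)).map (fun a => (a, z)))))
    (hP₁ : P₁ = p.bind (fun z => p.bind (fun z' => q.bind (fun T =>
      (M (z' ::ₘ T)).map (fun a => (a, z)))))) :
    (∀ E : Set (α × Z),
      P₀.toOuterMeasure E ≤ ENNReal.ofReal (Real.exp ε) * P₁.toOuterMeasure E ∧
      P₁.toOuterMeasure E ≤ ENNReal.ofReal (Real.exp ε) * P₀.toOuterMeasure E) ∧
    (∀ f : α × Z → Bool,
      (P₀.toOuterMeasure {x | f x = false}).toReal -
          (P₁.toOuterMeasure {x | f x = false}).toReal ≤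
        (Real.exp ε - 1) / (Real.exp ε + 1)) :=
  iid_membership_advantage_bound_general M ε hDP p q P₀ P₁ hP₀ hP₁
end

section
/- For all ε ≥ 0 and δ ∈ [0,1], the three bounds satisfy the chain (e^ε − 1 + 2δ)/(e^ε + 1) ≤ 1 − e^{−ε}(1 − δ) ≤ min(1, e^ε − 1 + δ·e^ε + δ), and for 0.1 ≤ ε ≤ 2 and δ = 10^{-5} the gap between the first two bounds, (1 − e^{−ε}(1−δ)) − (e^ε − 1 + 2δ)/(e^ε + 1), is positive. -/
/-!
Writing `E = exp ε`, the gap between Erlingsson et al.'s bound and the new one is the explicit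
fraction `(1 - δ) (E - 1) / (E (E + 1))`, which is nonnegative for `ε ≥ 0`, `δ ≤ 1` and positive
as soon as `ε > 0`, `δ < 1`. The comparison with the Yeom-style bound reduces to
`1 - exp (-ε) ≤ exp ε - 1`, i.e. `cosh ε ≥ 1`.
-/

open Real

namespace MembershipAdvantage

noncomputable def newBound (ε δ : ℝ) : ℝ := (exp ε - 1 + 2 * δ) / (exp ε + 1)

noncomputable def erlingssonBound (ε δ : ℝ) : ℝ := 1 - exp (-ε) * (1 - δ)

noncomputable def yeomBound (ε δ : ℝ) : ℝ := min 1 (exp ε - 1 + δ * exp ε + δ)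

theorem erlingssonBound_sub_newBound (ε δ : ℝ) :
    erlingssonBound ε δ - newBound ε δ = (1 - δ) * (exp ε - 1) / (exp ε * (exp ε + 1)) := by
  have hE : 0 < exp ε := exp_pos ε
  rw [erlingssonBound, newBound, exp_neg]
  field_simp
  ring

theorem newBound_le_erlingssonBound {ε δ : ℝ} (hε : 0 ≤ ε) (hδ : δ ≤ 1) :
    newBound ε δ ≤ erlingssonBound ε δ := by
  rw [← sub_nonneg, erlingssonBound_sub_newBound]
  have hE : 1 ≤ exp ε := one_le_exp hε
  have hδ' : 0 ≤ 1 - δ := by linarith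
  positivity

theorem newBound_lt_erlingssonBound {ε δ : ℝ} (hε : 0 < ε) (hδ : δ < 1) :
    newBound ε δ < erlingssonBound ε δ := by
  rw [← sub_pos, erlingssonBound_sub_newBound]
  have hE : 0 < exp ε - 1 := by linarith [one_lt_exp_iff.2 hε]
  have hδ' : 0 < 1 - δ := by linarith
  positivity

theorem one_sub_exp_neg_le_exp_sub_one (x : ℝ) : 1 - exp (-x) ≤ exp x - 1 := by
  have h := one_le_cosh x
  rw [cosh_eq] at h
  linarith

theorem erlingssonBound_le_yeomBound {ε δ : ℝ} (hε : 0 ≤ ε) (hδ₀ : 0 ≤ δ) (hδ₁ : δ ≤ 1) :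
    erlingssonBound ε δ ≤ yeomBound ε δ := by
  have hexp : 0 ≤ exp (-ε) * (1 - δ) := mul_nonneg (exp_nonneg _) (by linarith)
  have hneg_le : δ * exp (-ε) ≤ δ * exp ε :=
    mul_le_mul_of_nonneg_left (exp_le_exp.2 (by linarith)) hδ₀
  refine le_min (by unfold erlingssonBound; linarith) ?_
  calc erlingssonBound ε δ = (1 - exp (-ε)) + δ * exp (-ε) := by unfold erlingssonBound; ring
    _ ≤ (exp ε - 1) + δ * exp ε + δ := by
      linarith [one_sub_exp_neg_le_exp_sub_one ε]

end MembershipAdvantage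

open MembershipAdvantage

theorem bounds_chain_and_gap_positive :
    (∀ ε δ : ℝ, 0 ≤ ε → 0 ≤ δ → δ ≤ 1 →
      (Real.exp ε - 1 + 2 * δ) / (Real.exp ε + 1) ≤ 1 - Real.exp (-ε) * (1 - δ) ∧
      1 - Real.exp (-ε) * (1 - δ) ≤
        min 1 (Real.exp ε - 1 + δ * Real.exp ε + δ)) ∧
    (∀ ε : ℝ, 0.1 ≤ ε → ε ≤ 2 →
      0 < (1 - Real.exp (-ε) * (1 - (10 : ℝ)^(-(5 : ℤ)))) -
        (Real.exp ε - 1 + 2 * (10 : ℝ)^(-(5 : ℤ))) / (Real.exp ε + 1)) := by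
  refine ⟨fun ε δ hε hδ₀ hδ₁ => ⟨newBound_le_erlingssonBound hε hδ₁,
    erlingssonBound_le_yeomBound hε hδ₀ hδ₁⟩, fun ε hε _ => ?_⟩
  exact sub_pos.2 (newBound_lt_erlingssonBound (by linarith) (by norm_num))
end
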